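/- Assume N ≤ p, and equip U_N with the structure of exponential type given by the truncated exponential exp_B(t) = 1 + tB + (tB)^2/2! + ⋯ + (tB)^{p−1}/(p−1)! for p-nilpotent strictly upper triangular B. Then for positive integers d, e with e(N−1) < d one has the inclusions (k[U_N])_{[e−1]} ⊆ k[U_N]_{<d} ⊆ (k[U_N])_{[(p−1)(d−1)]} of subspaces of k[U_N]. -/
import Mathlib


noncomputable section

open TensorProduct

variable (k : Type) [Field k]

/-- index set of strictly-upper-triangular matrix entries -/
abbrev UTIdx (N : ℕ) : Type := {ij : Fin N × Fin N // ij.1 < ij.2}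

/-- `k[U_N]`, the polynomial algebra on the coordinate functions `x_{i,j}`, `i < j`. -/
abbrev UNCoord (N : ℕ) : Type := MvPolynomial (UTIdx N) k

/-- `k[U_N]_{<d}`: polynomials of (total) degree `< d`. -/
def UNdegLT (N d : ℕ) : Submodule k (UNCoord k N) :=
  MvPolynomial.restrictTotalDegree (UTIdx N) k (d - 1)

/-- strictly upper triangular `N×N` matrices; for `N ≤ p` these are exactly the
`p`-nilpotent elements of `Lie(U_N)` -/
abbrev StrictUT (N : ℕ) : Type :=
  {B : Matrix (Fin N) (Fin N) k // ∀ i j : Fin N, j ≤ i → B i j = 0}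

/-- the truncated exponential `exp_B(t) = 1 + tB + (tB)²/2! + ⋯ + (tB)^{p-1}/(p-1)!`,
as the map on coordinate algebras `exp_B^* : k[U_N] → k[T]`; `x_{i,j}` is sent to the
`(i,j)`-entry of `Σ_{ℓ<p} (Tℓ-th term) Bℓ/ℓ!`. -/
def expUN (p N : ℕ) (B : StrictUT k N) : UNCoord k N →ₐ[k] Polynomial k :=
  MvPolynomial.aeval fun ij : UTIdx N =>
    ∑ ℓ ∈ Finset.range p,
      Polynomial.C (((ℓ.factorial : k))⁻¹ * ((B.1 ^ ℓ) ij.1.1 ij.1.2)) *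
        Polynomial.X ^ ℓ

/-- `(k[U_N])_{[d]}`: the filtration of `k[U_N]` by exponential degree, defined via the
truncated exponentials `exp_B`, `B` strictly upper triangular (`p`-nilpotent). -/
def expFiltUN (p N : ℕ) (d : ℕ) : Submodule k (UNCoord k N) :=
  ⨅ (B : StrictUT k N) (j : ℕ) (_ : d < j),
    LinearMap.ker ((Polynomial.lcoeff k j) ∘ₗ (expUN k p N B).toLinearMap)


section

variable {k : Type} [Field k] {N : ℕ}

namespace St17

variable {R : Type} [CommRing R]

/-- strictly upper triangular -/
def SU (M : Matrix (Fin N) (Fin N) R) : Prop := ∀ i j : Fin N, ¬ i < j → M i j = 0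

theorem pow0 {M : Matrix (Fin N) (Fin N) R} (hM : SU M) :
    ∀ (ℓ : ℕ) (i j : Fin N), (j : ℕ) < (i : ℕ) + ℓ → (M ^ ℓ) i j = 0 := by
  intro ℓ
  induction ℓ with
  | zero => intro i j h; exact Matrix.one_apply_ne (by intro e; subst e; omega)
  | succ n ih =>
      intro i j h
      rw [pow_succ', Matrix.mul_apply]
      refine Finset.sum_eq_zero fun c _ => ?_
      by_cases hc : i < c
      · rw [ih c j (by have := Fin.lt_def.mp hc; omega), mul_zero]
      · rw [hM i c hc, zero_mul]

theorem powEq {A B : Matrix (Fin N) (Fin N) R} (hA : SU A) (hB : SU B) {g : ℕ}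
    (hAB : ∀ i j : Fin N, (j : ℕ) ≤ (i : ℕ) + g → A i j = B i j) :
    ∀ (ℓ : ℕ) (i j : Fin N), (j : ℕ) + 1 ≤ (i : ℕ) + g + ℓ → (A ^ ℓ) i j = (B ^ ℓ) i j := by
  intro ℓ
  induction ℓ with
  | zero => intro i j _; rfl
  | succ n ih =>
      intro i j h
      rw [pow_succ', pow_succ', Matrix.mul_apply, Matrix.mul_apply]
      refine Finset.sum_congr rfl fun c _ => ?_
      by_cases hc : i < c
      · have hc' : (i : ℕ) < (c : ℕ) := Fin.lt_def.mp hc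
        rw [ih c j (by omega)]
        by_cases hz : (B ^ n) c j = 0
        · rw [hz, mul_zero, mul_zero]
        · have hcj : (c : ℕ) + n ≤ (j : ℕ) := by
            by_contra hcon
            exact hz (pow0 hB n c j (by omega))
          rw [hAB i c (by omega)]
      · rw [hA i c hc, hB i c hc]; simp

theorem degEntryPow {M : Matrix (Fin N) (Fin N) (MvPolynomial (UTIdx N) k)} (hM : SU M)
    (hd : ∀ i j : Fin N, (M i j).totalDegree ≤ (j : ℕ) - (i : ℕ)) :
    ∀ (ℓ : ℕ) (i j : Fin N), ((M ^ ℓ) i j).totalDegree ≤ (j : ℕ) - (i : ℕ) := by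
  intro ℓ
  induction ℓ with
  | zero =>
      intro i j
      by_cases h : i = j
      · subst h; rw [pow_zero, Matrix.one_apply_eq]; simp
      · rw [pow_zero, Matrix.one_apply_ne h]; simp
  | succ n ih =>
      intro i j
      rw [pow_succ, Matrix.mul_apply]
      refine (MvPolynomial.totalDegree_finset_sum _ _).trans (Finset.sup_le fun c _ => ?_)
      by_cases hci : (c : ℕ) < (i : ℕ)
      · rw [pow0 hM n i c (by omega), zero_mul]; simp
      · by_cases hc : c < j
        · refine (MvPolynomial.totalDegree_mul _ _).trans ?_
          have h1 := ih i c
          have h2 := hd c j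
          have hcj' := Fin.lt_def.mp hc
          omega
        · rw [hM c j hc, mul_zero]; simp

end St17

section
namespace St17

def Lmat (k : Type) [Field k] (N p : ℕ) : ℕ → Matrix (Fin N) (Fin N) (MvPolynomial (UTIdx N) k)
  | 0 => 0
  | (g+1) => Matrix.of fun i j =>
      if h : i < j ∧ (j : ℕ) ≤ (i : ℕ) + (g+1) then
        MvPolynomial.X ⟨(i, j), h.1⟩ -
          ∑ ℓ ∈ Finset.Ioo 1 p, ((ℓ.factorial : k))⁻¹ • ((Lmat k N p g) ^ ℓ) i j
      else 0

variable (p : ℕ)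

theorem Lmat_succ_apply (g : ℕ) (i j : Fin N) : Lmat k N p (g+1) i j =
    if h : i < j ∧ (j : ℕ) ≤ (i : ℕ) + (g+1) then
      MvPolynomial.X ⟨(i, j), h.1⟩ -
        ∑ ℓ ∈ Finset.Ioo 1 p, ((ℓ.factorial : k))⁻¹ • ((Lmat k N p g) ^ ℓ) i j
    else 0 := rfl


theorem Lmat_su : ∀ g : ℕ, SU (Lmat k N p g) := by
  intro g i j h
  cases g with
  | zero => rfl
  | succ n =>
      show Matrix.of _ i j = 0
      rw [Matrix.of_apply, dif_neg (by tauto)]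

theorem Lmat_zero_of_gap : ∀ (g : ℕ) (i j : Fin N), (i : ℕ) + g < (j : ℕ) →
    Lmat k N p g i j = 0 := by
  intro g i j h
  cases g with
  | zero => rfl
  | succ n =>
      show Matrix.of _ i j = 0
      rw [Matrix.of_apply, dif_neg (by rintro ⟨-, h2⟩; omega)]

theorem Lmat_stab : ∀ (g : ℕ) (i j : Fin N), (j : ℕ) ≤ (i : ℕ) + g →
    Lmat k N p g i j = Lmat k N p (g+1) i j := by
  intro g
  induction g with
  | zero =>
      intro i j h
      show (0 : MvPolynomial (UTIdx N) k) = Matrix.of _ i j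
      rw [Matrix.of_apply, dif_neg (by rintro ⟨h1, -⟩; have := Fin.lt_def.mp h1; omega)]
  | succ n ih =>
      intro i j h
      show Matrix.of _ i j = Matrix.of _ i j
      rw [Matrix.of_apply, Matrix.of_apply]
      by_cases hij : i < j
      · have hij' := Fin.lt_def.mp hij
        rw [dif_pos ⟨hij, by omega⟩, dif_pos ⟨hij, by omega⟩]
        congr 1
        refine Finset.sum_congr rfl fun ℓ hℓ => ?_
        have hℓ2 : 2 ≤ ℓ := (Finset.mem_Ioo.mp hℓ).1
        congr 1
        exact powEq (Lmat_su p _) (Lmat_su p _) ih ℓ i j (by omega)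
      · rw [dif_neg (by tauto), dif_neg (by tauto)]

theorem Lmat_stab' {g g' : ℕ} (hgg : g ≤ g') : ∀ (i j : Fin N), (j : ℕ) ≤ (i : ℕ) + g →
    Lmat k N p g i j = Lmat k N p g' i j := by
  induction g' with
  | zero => intro i j h; have : g = 0 := by omega
            subst this; rfl
  | succ n ih =>
      intro i j h
      rcases Nat.lt_or_ge g (n+1) with h1 | h1
      · rw [ih (by omega) i j h, Lmat_stab p n i j (by omega)]
      · have : g = n + 1 := by omega
        subst this; rfl

theorem Lmat_deg : ∀ (g : ℕ) (i j : Fin N),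
    (Lmat (k := k) N p g i j).totalDegree ≤ (j : ℕ) - (i : ℕ) := by
  intro g
  induction g with
  | zero => intro i j; show (0 : MvPolynomial (UTIdx N) k).totalDegree ≤ _; simp
  | succ n ih =>
      intro i j
      rw [Lmat_succ_apply]
      by_cases h : i < j ∧ (j : ℕ) ≤ (i : ℕ) + (n+1)
      · rw [dif_pos h]
        have hij' := Fin.lt_def.mp h.1
        rw [sub_eq_add_neg]
        refine (MvPolynomial.totalDegree_add _ _).trans (max_le ?_ ?_)
        · rw [MvPolynomial.totalDegree_X]; omega
        · rw [MvPolynomial.totalDegree_neg]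
          refine (MvPolynomial.totalDegree_finset_sum _ _).trans (Finset.sup_le fun ℓ _ => ?_)
          refine (MvPolynomial.totalDegree_smul_le _ _).trans ?_
          exact degEntryPow (Lmat_su p n) ih ℓ i j
      · rw [dif_neg h]; simp

end St17

section
namespace St17
open MvPolynomial

variable {k : Type} [Field k] {N : ℕ} (p : ℕ)

theorem Lm_fix (i j : Fin N) (h : i < j) :
    Lmat k N p (N+1) i j = MvPolynomial.X ⟨(i,j), h⟩ -
      ∑ ℓ ∈ Finset.Ioo 1 p, ((ℓ.factorial : k))⁻¹ • ((Lmat k N p (N+1)) ^ ℓ) i j := by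
  have hj : (j : ℕ) < N := j.isLt
  rw [Lmat_succ_apply, dif_pos ⟨h, by omega⟩]
  congr 1
  refine Finset.sum_congr rfl fun ℓ hℓ => ?_
  congr 1
  exact powEq (Lmat_su p N) (Lmat_su p (N+1)) (Lmat_stab p N) ℓ i j (by omega)

theorem map_pow_apply {R S : Type} [CommSemiring R] [CommSemiring S] (ψ : R →+* S)
    (M : Matrix (Fin N) (Fin N) R) (ℓ : ℕ) (i j : Fin N) :
    ψ ((M ^ ℓ) i j) = ((M.map ψ) ^ ℓ) i j := by
  rw [← RingHom.mapMatrix_apply, ← map_pow, RingHom.mapMatrix_apply, Matrix.map_apply]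

def Xmat (k : Type) [Field k] (N : ℕ) : Matrix (Fin N) (Fin N) (MvPolynomial (UTIdx N) k) :=
  Matrix.of fun i j => if h : i < j then MvPolynomial.X ⟨(i,j), h⟩ else 0

theorem Xmat_su : SU (Xmat k N) := fun i j h => dif_neg h

def Evec (k : Type) [Field k] (N p : ℕ) : UTIdx N → MvPolynomial (UTIdx N) k := fun v =>
  ∑ ℓ ∈ Finset.range p, ((ℓ.factorial : k))⁻¹ • ((Xmat k N ^ ℓ) v.1.1 v.1.2)

def Lfun (k : Type) [Field k] (N p : ℕ) : UTIdx N → MvPolynomial (UTIdx N) k := fun v =>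
  Lmat k N p (N+1) v.1.1 v.1.2

theorem range_split (hp : 2 ≤ p) :
    Finset.range p = insert 0 (insert 1 (Finset.Ioo 1 p)) := by
  ext x; simp only [Finset.mem_range, Finset.mem_insert, Finset.mem_Ioo]; omega

theorem aeval_L_Evec (hp : 2 ≤ p) (v : UTIdx N) :
    MvPolynomial.aeval (Lfun k N p) (Evec k N p v) = MvPolynomial.X (R := k) v := by
  obtain ⟨⟨i, j⟩, h⟩ := v
  have hmap : (Xmat k N).map (MvPolynomial.aeval (Lfun k N p)) = Lmat k N p (N+1) := by
    refine Matrix.ext fun i' j' => ?_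
    rw [Matrix.map_apply]
    show MvPolynomial.aeval _ (Matrix.of _ i' j') = _
    rw [Matrix.of_apply]
    by_cases h' : i' < j'
    · rw [dif_pos h', MvPolynomial.aeval_X]; rfl
    · rw [dif_neg h', map_zero, Lmat_su p _ i' j' h']
  have key : ∀ ℓ : ℕ, MvPolynomial.aeval (Lfun k N p) ((Xmat k N ^ ℓ) i j)
      = ((Lmat k N p (N+1)) ^ ℓ) i j := by
    intro ℓ
    rw [show (MvPolynomial.aeval (Lfun k N p)) ((Xmat k N ^ ℓ) i j)
        = ((MvPolynomial.aeval (Lfun k N p)).toRingHom) ((Xmat k N ^ ℓ) i j) from rfl,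
      map_pow_apply, ← hmap]
    rfl
  show MvPolynomial.aeval _ (∑ ℓ ∈ Finset.range p, _) = _
  rw [map_sum]
  have : ∀ ℓ ∈ Finset.range p, MvPolynomial.aeval (Lfun k N p)
      (((ℓ.factorial : k))⁻¹ • ((Xmat k N ^ ℓ) i j))
      = ((ℓ.factorial : k))⁻¹ • ((Lmat k N p (N+1)) ^ ℓ) i j := by
    intro ℓ _
    rw [map_smul, key]
  rw [Finset.sum_congr rfl this, range_split p hp, Finset.sum_insert (by simp),
    Finset.sum_insert (by simp)]
  have h0 : ((Nat.factorial 0 : k))⁻¹ • ((Lmat k N p (N+1)) ^ 0) i j = 0 := by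
    rw [pow_zero, Matrix.one_apply_ne (by intro e; subst e; exact lt_irrefl _ h)]
    simp
  have h1 : ((Nat.factorial 1 : k))⁻¹ • ((Lmat k N p (N+1)) ^ 1) i j
      = Lmat k N p (N+1) i j := by
    simp [Nat.factorial]
  rw [h0, h1, zero_add, Lm_fix p i j h]
  ring

end St17

section
namespace St17
open MvPolynomial

variable {k : Type} [Field k] {σ : Type}

theorem totalDegree_aeval_le (s : σ → MvPolynomial σ k) (m : ℕ)
    (hs : ∀ v, (s v).totalDegree ≤ m) (g : MvPolynomial σ k) :
    (MvPolynomial.aeval s g).totalDegree ≤ m * g.totalDegree := by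
  conv_lhs => rw [g.as_sum, map_sum]
  refine (MvPolynomial.totalDegree_finset_sum _ _).trans (Finset.sup_le fun α hα => ?_)
  rw [MvPolynomial.aeval_monomial]
  refine (MvPolynomial.totalDegree_mul _ _).trans ?_
  have h1 : (algebraMap k (MvPolynomial σ k) (g.coeff α)).totalDegree = 0 :=
    MvPolynomial.totalDegree_C _
  rw [h1, zero_add]
  refine (MvPolynomial.totalDegree_finset_prod _ _).trans ?_
  have h2 : ∑ v ∈ α.support, ((s v) ^ (α v)).totalDegree ≤ ∑ v ∈ α.support, (α v) * m := by
    refine Finset.sum_le_sum fun v _ => ?_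
    exact (MvPolynomial.totalDegree_pow _ _).trans
      (Nat.mul_le_mul_left _ (hs v))
  refine h2.trans ?_
  rw [← Finset.sum_mul]
  have h3 : (∑ v ∈ α.support, α v) ≤ g.totalDegree := MvPolynomial.le_totalDegree hα
  calc (∑ v ∈ α.support, α v) * m ≤ g.totalDegree * m := Nat.mul_le_mul_right _ h3
    _ = m * g.totalDegree := Nat.mul_comm _ _

theorem natDegree_aeval_le (s : σ → Polynomial k) (m : ℕ)
    (hs : ∀ v, (s v).natDegree ≤ m) (g : MvPolynomial σ k) :
    (MvPolynomial.aeval s g).natDegree ≤ m * g.totalDegree := by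
  conv_lhs => rw [g.as_sum, map_sum]
  refine Polynomial.natDegree_sum_le_of_forall_le _ _ fun α hα => ?_
  rw [MvPolynomial.aeval_monomial]
  refine (Polynomial.natDegree_mul_le).trans ?_
  have h1 : (algebraMap k (Polynomial k) (g.coeff α)).natDegree = 0 :=
    Polynomial.natDegree_C _
  rw [h1, zero_add]
  refine (Polynomial.natDegree_prod_le _ _).trans ?_
  have h2 : ∑ v ∈ α.support, ((s v) ^ (α v)).natDegree ≤ ∑ v ∈ α.support, (α v) * m :=
    Finset.sum_le_sum fun v _ =>
      (Polynomial.natDegree_pow_le).trans (Nat.mul_le_mul_left _ (hs v))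
  refine h2.trans ?_
  rw [← Finset.sum_mul]
  have h3 : (∑ v ∈ α.support, α v) ≤ g.totalDegree := MvPolynomial.le_totalDegree hα
  calc (∑ v ∈ α.support, α v) * m ≤ g.totalDegree * m := Nat.mul_le_mul_right _ h3
    _ = m * g.totalDegree := Nat.mul_comm _ _

end St17

section
namespace St17
open MvPolynomial

variable {k : Type} [Field k] {σ : Type}

theorem coeff_aeval_scale (b : σ → k) (g : MvPolynomial σ k) (n : ℕ) :
    (MvPolynomial.aeval (fun v => Polynomial.C (b v) * Polynomial.X) g).coeff n
      = MvPolynomial.eval b (MvPolynomial.homogeneousComponent n g) := by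
  conv_lhs => rw [g.as_sum, map_sum]
  rw [Polynomial.finset_sum_coeff, MvPolynomial.homogeneousComponent_apply, map_sum,
    Finset.sum_filter]
  refine Finset.sum_congr rfl fun α hα => ?_
  rw [MvPolynomial.aeval_monomial]
  have hprod : (α.prod fun v e => (Polynomial.C (b v) * Polynomial.X) ^ e)
      = Polynomial.C (α.prod fun v e => (b v) ^ e) * Polynomial.X ^ (α.degree) := by
    rw [Finsupp.prod]
    simp only [mul_pow]
    rw [Finset.prod_mul_distrib, Finset.prod_pow_eq_pow_sum]
    congr 1
    · simp [Finsupp.prod, map_prod, map_pow]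
  rw [hprod, ← mul_assoc, Polynomial.algebraMap_eq, ← Polynomial.C_mul,
    Polynomial.coeff_C_mul, Polynomial.coeff_X_pow, MvPolynomial.eval_monomial]
  by_cases h : α.degree = n
  · simp [h]
  · rw [if_neg (by omega), if_neg h, mul_zero]


theorem hc_top (g : MvPolynomial σ k) (hg : g ≠ 0) :
    MvPolynomial.homogeneousComponent g.totalDegree g ≠ 0 := by
  obtain ⟨α, hα, hsup⟩ := Finset.exists_mem_eq_sup g.support
    (MvPolynomial.support_nonempty.mpr hg) (fun α => α.sum fun _ e => e)
  have hc : MvPolynomial.coeff α (MvPolynomial.homogeneousComponent g.totalDegree g)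
      = MvPolynomial.coeff α g := by
    rw [MvPolynomial.coeff_homogeneousComponent,
      if_pos (by rw [MvPolynomial.totalDegree, hsup]; rfl)]
  intro h0
  rw [h0, MvPolynomial.coeff_zero] at hc
  exact (MvPolynomial.mem_support_iff.mp hα) hc.symm

end St17

namespace St17
open MvPolynomial

variable {N : ℕ}

theorem Lfun_deg (p : ℕ) (v : UTIdx N) : (Lfun k N p v).totalDegree ≤ N - 1 := by
  refine (Lmat_deg p (N+1) v.1.1 v.1.2).trans ?_
  have := v.1.2.isLt
  omega

def Bof (N : ℕ) (b : UTIdx N → k) : StrictUT k N :=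
  ⟨Matrix.of fun i j => if h : i < j then b ⟨(i,j), h⟩ else 0,
   fun i j hji => dif_neg (Fin.not_lt.mpr hji)⟩

theorem Bof_apply (N : ℕ) (b : UTIdx N → k) (v : UTIdx N) :
    (Bof N b).1 v.1.1 v.1.2 = b v := by
  obtain ⟨⟨i, j⟩, h⟩ := v
  exact dif_pos h

theorem expUN_factor (p N : ℕ) (B : StrictUT k N) :
    expUN k p N B = (MvPolynomial.aeval
        (fun v : UTIdx N => Polynomial.C (B.1 v.1.1 v.1.2) * Polynomial.X)).comp
      (MvPolynomial.aeval (Evec k N p)) := by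
  refine MvPolynomial.algHom_ext fun v => ?_
  obtain ⟨⟨i, j⟩, h⟩ := v
  set θ := MvPolynomial.aeval (R := k)
      (fun v : UTIdx N => Polynomial.C (B.1 v.1.1 v.1.2) * Polynomial.X) with hθ
  have hmap : (Xmat k N).map θ = (Polynomial.X : Polynomial k) • (B.1.map Polynomial.C) := by
    refine Matrix.ext fun i' j' => ?_
    rw [Matrix.map_apply, Matrix.smul_apply, Matrix.map_apply]
    show θ (Matrix.of _ i' j') = _
    rw [Matrix.of_apply]
    by_cases h' : i' < j'
    · rw [dif_pos h', hθ, MvPolynomial.aeval_X, smul_eq_mul]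
      ring
    · rw [dif_neg h', B.2 i' j' (Fin.not_lt.mp h'), map_zero, map_zero, smul_zero]
  have key : ∀ ℓ, θ ((Xmat k N ^ ℓ) i j)
      = Polynomial.C ((B.1 ^ ℓ) i j) * Polynomial.X ^ ℓ := by
    intro ℓ
    rw [show θ ((Xmat k N ^ ℓ) i j) = θ.toRingHom ((Xmat k N ^ ℓ) i j) from rfl,
      map_pow_apply,
      show ((Xmat k N).map ⇑θ.toRingHom) = ((Xmat k N).map ⇑θ) from rfl, hmap, smul_pow]
    have hBpow : (B.1.map Polynomial.C) ^ ℓ = (B.1 ^ ℓ).map Polynomial.C := by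
      rw [← RingHom.mapMatrix_apply, ← RingHom.mapMatrix_apply, map_pow]
    rw [hBpow, Matrix.smul_apply, Matrix.map_apply, smul_eq_mul]
    ring
  rw [AlgHom.comp_apply, MvPolynomial.aeval_X, expUN, MvPolynomial.aeval_X, Evec, map_sum]
  refine Finset.sum_congr rfl fun ℓ _ => ?_
  rw [map_smul, key, Polynomial.smul_eq_C_mul, ← mul_assoc, ← Polynomial.C_mul]

end St17

/-- **Statement 17**: for `N ≤ p` and positive integers `d`, `e` with `e(N-1) < d`,
`(k[U_N])_{[e-1]} ⊆ k[U_N]_{<d} ⊆ (k[U_N])_{[(p-1)(d-1)]}`. -/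
theorem statement17 (p : ℕ) [Fact p.Prime] [CharP k p] [IsAlgClosed k]
    (N : ℕ) (hN : N ≤ p) (d e : ℕ) (hd : 0 < d) (he : 0 < e)
    (hed : e * (N - 1) < d) :
    expFiltUN k p N (e - 1) ≤ UNdegLT k N d ∧
    UNdegLT k N d ≤ expFiltUN k p N ((p - 1) * (d - 1)) := by
  have hp2 : 2 ≤ p := (Fact.out : p.Prime).two_le
  constructor
  · -- first inclusion
    intro f hf
    simp only [expFiltUN, Submodule.mem_iInf, LinearMap.mem_ker, LinearMap.comp_apply,
      AlgHom.toLinearMap_apply, Polynomial.lcoeff_apply] at hf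
    set g := MvPolynomial.aeval (St17.Evec k N p) f with hg
    have hfg : f = MvPolynomial.aeval (St17.Lfun k N p) g := by
      rw [hg, ← AlgHom.comp_apply]
      have hc : (MvPolynomial.aeval (St17.Lfun k N p)).comp
          (MvPolynomial.aeval (St17.Evec k N p))
          = AlgHom.id k (MvPolynomial (UTIdx N) k) := by
        refine MvPolynomial.algHom_ext fun v => ?_
        rw [AlgHom.comp_apply, MvPolynomial.aeval_X, St17.aeval_L_Evec p hp2 v,
          AlgHom.id_apply]
      rw [hc, AlgHom.id_apply]
    have hgdeg : g.totalDegree ≤ e - 1 := by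
      by_contra hcon
      push_neg at hcon
      have hgne : g ≠ 0 := by
        intro h0
        rw [h0, MvPolynomial.totalDegree_zero] at hcon
        omega
      have hhc : MvPolynomial.homogeneousComponent g.totalDegree g = 0 := by
        apply MvPolynomial.funext (R := k)
        intro b
        rw [map_zero, ← St17.coeff_aeval_scale]
        have hfac := St17.expUN_factor p N (St17.Bof N b)
        have : (MvPolynomial.aeval
            (fun v : UTIdx N => Polynomial.C ((St17.Bof N b).1 v.1.1 v.1.2) * Polynomial.X)) g
            = expUN k p N (St17.Bof N b) f := by
          rw [hfac, AlgHom.comp_apply, hg]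
        have hb : (fun v : UTIdx N => Polynomial.C (b v) * Polynomial.X)
            = fun v : UTIdx N => Polynomial.C ((St17.Bof N b).1 v.1.1 v.1.2) * Polynomial.X := by
          funext v
          rw [St17.Bof_apply]
        rw [hb, this]
        exact hf (St17.Bof N b) g.totalDegree hcon
      exact St17.hc_top g hgne hhc
    rw [UNdegLT, MvPolynomial.mem_restrictTotalDegree, hfg]
    refine (St17.totalDegree_aeval_le _ (N - 1) (St17.Lfun_deg p) g).trans ?_
    have h1 : (N - 1) * g.totalDegree ≤ (N - 1) * (e - 1) :=
      Nat.mul_le_mul_left _ hgdeg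
    have h2 : (N - 1) * (e - 1) ≤ (N - 1) * e := Nat.mul_le_mul_left _ (by omega)
    have h3 : e * (N - 1) ≤ d - 1 := by omega
    calc (N - 1) * g.totalDegree ≤ (N - 1) * e := h1.trans h2
      _ = e * (N - 1) := Nat.mul_comm _ _
      _ ≤ d - 1 := h3
  · -- second inclusion
    intro f hf
    rw [UNdegLT, MvPolynomial.mem_restrictTotalDegree] at hf
    simp only [expFiltUN, Submodule.mem_iInf, LinearMap.mem_ker, LinearMap.comp_apply,
      AlgHom.toLinearMap_apply, Polynomial.lcoeff_apply]
    intro B j hj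
    apply Polynomial.coeff_eq_zero_of_natDegree_lt
    have hdeg : (expUN k p N B f).natDegree ≤ (p - 1) * f.totalDegree := by
      refine St17.natDegree_aeval_le _ (p - 1) (fun v => ?_) f
      refine Polynomial.natDegree_sum_le_of_forall_le _ _ fun ℓ hℓ => ?_
      refine (Polynomial.natDegree_C_mul_le _ _).trans ?_
      refine (Polynomial.natDegree_X_pow_le _).trans ?_
      have := Finset.mem_range.mp hℓ
      omega
    have : (p - 1) * f.totalDegree ≤ (p - 1) * (d - 1) := Nat.mul_le_mul_left _ hf
    omega

end
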